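/- Let μ, ν ∈ ℂ, c ≠ 0, m, r, s ∈ ℤ^N, g, g′ ∈ ġ and 1 ≤ b ≤ N. In the g(μ,ν)-module V_g(c) the following identities hold: (t₀t^s k₀)·(t₀^{-1}t^r⊗g)·q^{m−r} = 0; (t₀t^s k_b)·(t₀^{-1}t^r⊗g)·q^{m−r} = 0; (t₀t^s⊗g′)·(t₀^{-1}t^r⊗g)·q^{m−r} = (g′|g)·c·q^{m+s}; (t₀t^s d̃₀)·(t₀^{-1}t^r⊗g)·q^{m−r} = 0; (t₀t^s d̃_b)·(t₀^{-1}t^r⊗g)·q^{m−r} = 0. -/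

import Mathlib

attribute [local instance 100] LieRing.ofAssociativeRing

namespace ToroidalPaper

noncomputable section

/-- multi-indices r ∈ ℤ^{N+1} -/
abbrev Idx (N : ℕ) := Fin (N + 1) → ℤ

/-- The model for the 1-forms Ω¹_R: the free module on k₀,…,k_N over R,
written in the monomial basis t^r k_p. -/
abbrev OmegaR (N : ℕ) := Idx N →₀ (Fin (N + 1) → ℂ)

/-- The subspace d(R) ⊆ Ω¹_R of exact forms: d(t^r) = Σ_p r_p t^r k_p. -/
def dR (N : ℕ) : Submodule ℂ (OmegaR N) :=
  Submodule.span ℂ {w : OmegaR N | ∃ r : Idx N, w = Finsupp.single r fun p => (r p : ℂ)}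

/-- K = Ω¹_R / d(R) -/
abbrev Kmod (N : ℕ) := OmegaR N ⧸ dR N

variable (N : ℕ) (g : Type) [LieRing g] [LieAlgebra ℂ g]

/-- The underlying vector space of the full toroidal Lie algebra:
(R ⊗ ġ) ⊕ K ⊕ D, where R ⊗ ġ is modeled as `Idx N →₀ g` (coefficient of t^r)
and D as `Idx N →₀ (Fin (N+1) → ℂ)` (coefficients of t^r d_p). -/
abbrev Carrier := (Idx N →₀ g) × Kmod N × (Idx N →₀ (Fin (N + 1) → ℂ))

/-- A realization of the vector space (R⊗ġ) ⊕ K ⊕ D as a Lie algebra: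
a Lie algebra `G` together with a linear identification with the model. -/
structure Tor where
  G : Type
  [instLieRing : LieRing G]
  [instLieAlgebra : LieAlgebra ℂ G]
  e : G ≃ₗ[ℂ] Carrier N g

attribute [instance] Tor.instLieRing Tor.instLieAlgebra

namespace Tor

variable {N g}
variable (T : Tor N g)

/-- the element t^r ⊗ x of R ⊗ ġ -/
def tg (r : Idx N) (x : g) : T.G := T.e.symm (Finsupp.single r x, 0, 0)

/-- the element t^r k_p of K -/
def k (r : Idx N) (p : Fin (N + 1)) : T.G :=
  T.e.symm (0, Submodule.Quotient.mk (p := dR N) (Finsupp.single r (Pi.single p 1)), 0)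

/-- the element t^r d_p of D -/
def d (r : Idx N) (p : Fin (N + 1)) : T.G :=
  T.e.symm (0, 0, Finsupp.single r (Pi.single p 1))

/-- t^m · d(t^r) = Σ_p r_p t^{r+m} k_p -/
def kSum (r m : Idx N) : T.G := ∑ p : Fin (N + 1), (r p : ℂ) • T.k (r + m) p

/-- The bracket relations of the full toroidal Lie algebra g(μ,ν). -/
structure IsToroidal (B : g →ₗ[ℂ] g →ₗ[ℂ] ℂ) (μ ν : ℂ) : Prop where
  br_gg : ∀ (r m : Idx N) (x y : g),
    ⁅T.tg r x, T.tg m y⁆ = T.tg (r + m) ⁅x, y⁆ + B x y • T.kSum r m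
  br_kg : ∀ (r m : Idx N) (p : Fin (N + 1)) (x : g), ⁅T.k r p, T.tg m x⁆ = 0
  br_kk : ∀ (r m : Idx N) (p q : Fin (N + 1)), ⁅T.k r p, T.k m q⁆ = 0
  br_dg : ∀ (r m : Idx N) (a : Fin (N + 1)) (x : g),
    ⁅T.d r a, T.tg m x⁆ = (m a : ℂ) • T.tg (r + m) x
  br_dk : ∀ (r m : Idx N) (a b : Fin (N + 1)),
    ⁅T.d r a, T.k m b⁆ = (m a : ℂ) • T.k (r + m) b
      + (if a = b then (1 : ℂ) else 0) • T.kSum r m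
  br_dd : ∀ (r m : Idx N) (a b : Fin (N + 1)),
    ⁅T.d r a, T.d m b⁆ = (m a : ℂ) • T.d (r + m) b - (r b : ℂ) • T.d (r + m) a
      + (μ * (m a : ℂ) * (r b : ℂ) + ν * (r a : ℂ) * (m b : ℂ)) •
          (∑ p : Fin (N + 1), (m p : ℂ) • T.k (r + m) p)

end Tor

end

end ToroidalPaper

namespace ToroidalPaper

noncomputable section

open scoped TensorProduct

/-- the multi-index of t₀^j t^r, r ∈ ℤ^N -/
def mIdx {N : ℕ} (j : ℤ) (r : Fin N → ℤ) : Idx N := Fin.cons j r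

/-- the standard basis vector ε_p of ℤ^N -/
def eps {N : ℕ} (p : Fin N) : Fin N → ℤ := Pi.single p 1

/-- the top T₀ = ℂ[q₁^±,…,q_N^±] -/
def T0c (N : ℕ) : Type := (Fin N → ℤ) →₀ ℂ

instance {N : ℕ} : AddCommGroup (T0c N) :=
  inferInstanceAs (AddCommGroup ((Fin N → ℤ) →₀ ℂ))

instance {N : ℕ} : Module ℂ (T0c N) :=
  inferInstanceAs (Module ℂ ((Fin N → ℤ) →₀ ℂ))

/-- the monomial q^m ∈ T₀ -/
def bq {N : ℕ} (m : Fin N → ℤ) : T0c N :=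
  show ((Fin N → ℤ) →₀ ℂ) from Finsupp.single m 1

namespace Tor

variable {N : ℕ} {g : Type} [LieRing g] [LieAlgebra ℂ g] (T : Tor N g)

/-- t₀^j t^r d̃_p = t₀^j t^r d_p − ν r_p t₀^j t^r k₀ (p = 1,…,N) -/
def dT (ν : ℂ) (j : ℤ) (r : Fin N → ℤ) (p : Fin N) : T.G :=
  T.d (mIdx j r) p.succ - (ν * (r p : ℂ)) • T.k (mIdx j r) 0

/-- t₀^j t^r d̃₀ = −t₀^j t^r d₀ + (μ+ν)(j+1/2) t₀^j t^r k₀ -/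
def dT0 (μ ν : ℂ) (j : ℤ) (r : Fin N → ℤ) : T.G :=
  - T.d (mIdx j r) 0 + ((μ + ν) * ((j : ℂ) + 1 / 2)) • T.k (mIdx j r) 0

/-- the universal enveloping algebra U(g(μ,ν)) -/
abbrev U := UniversalEnvelopingAlgebra ℂ T.G

/-- the canonical embedding g(μ,ν) → U(g(μ,ν)) -/
def uι : T.G →ₗ⁅ℂ⁆ T.U := UniversalEnvelopingAlgebra.ι ℂ

/-- The spanning set of the subalgebra g^(+):  t₀^j t^r k₀ (j ≥ 1);
t₀^j t^r k_p, t₀^j t^r ⊗ g, t₀^j t^r d̃_p (j ≥ 0, 1 ≤ p ≤ N);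
t₀^j t^r d̃₀ (j ≥ -1). -/
def gPlusGen (μ ν : ℂ) : Set T.G :=
  {z | ∃ (j : ℤ) (r : Fin N → ℤ),
    (1 ≤ j ∧ z = T.k (mIdx j r) 0)
    ∨ (∃ p : Fin N, 0 ≤ j ∧ z = T.k (mIdx j r) p.succ)
    ∨ (∃ x : g, 0 ≤ j ∧ z = T.tg (mIdx j r) x)
    ∨ (∃ p : Fin N, 0 ≤ j ∧ z = T.dT ν j r p)
    ∨ (-1 ≤ j ∧ z = T.dT0 μ ν j r)}

/-- V_g = U(g) ⊗_{U(g^(+))} ℂ1, realized as the quotient of U(g) by the left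
ideal generated by g^(+). -/
def Vg (μ ν : ℂ) :=
  T.U ⧸ Submodule.span T.U ((⇑(T.uι)) '' T.gPlusGen μ ν)

instance (μ ν : ℂ) : AddCommGroup (T.Vg μ ν) :=
  inferInstanceAs (AddCommGroup (T.U ⧸ _))

instance (μ ν : ℂ) : Module T.U (T.Vg μ ν) :=
  inferInstanceAs (Module T.U (T.U ⧸ _))

instance (μ ν : ℂ) : Module ℂ (T.Vg μ ν) :=
  inferInstanceAs (Module ℂ (T.U ⧸ _))

instance (μ ν : ℂ) : IsScalarTower ℂ T.U (T.Vg μ ν) :=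
  inferInstanceAs (IsScalarTower ℂ T.U (T.U ⧸ _))

/-- the highest weight vector 1 ∈ V_g -/
def vac (μ ν : ℂ) : T.Vg μ ν := Submodule.Quotient.mk 1

/-- the set S = {k₀1 − c·1, (t^r k₀)(t^m k₀)1 − c (t^{r+m} k₀)1} -/
def Sset (μ ν c : ℂ) : Set (T.Vg μ ν) :=
  {w | w = T.uι (T.k (mIdx 0 0) 0) • T.vac μ ν - c • T.vac μ ν
    ∨ ∃ r m : Fin N → ℤ,
      w = T.uι (T.k (mIdx 0 r) 0) • (T.uι (T.k (mIdx 0 m) 0) • T.vac μ ν)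
        - c • (T.uι (T.k (mIdx 0 (r + m)) 0) • T.vac μ ν)}

/-- the g(μ,ν)-submodule R(S) of V_g generated by S -/
def RS (μ ν c : ℂ) : Submodule T.U (T.Vg μ ν) :=
  Submodule.span T.U (T.Sset μ ν c)

/-- V_g(c) = V_g / R(S) -/
def VgC (μ ν c : ℂ) := T.Vg μ ν ⧸ T.RS μ ν c

instance (μ ν c : ℂ) : AddCommGroup (T.VgC μ ν c) :=
  inferInstanceAs (AddCommGroup (T.Vg μ ν ⧸ _))

instance (μ ν c : ℂ) : Module T.U (T.VgC μ ν c) :=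
  inferInstanceAs (Module T.U (T.Vg μ ν ⧸ _))

instance (μ ν c : ℂ) : Module ℂ (T.VgC μ ν c) :=
  inferInstanceAs (Module ℂ (T.Vg μ ν ⧸ T.RS μ ν c))

instance (μ ν c : ℂ) : IsScalarTower ℂ T.U (T.VgC μ ν c) :=
  inferInstanceAs (IsScalarTower ℂ T.U (T.Vg μ ν ⧸ T.RS μ ν c))

/-- q^m = (1/c) (t^m k₀) 1 ∈ V_g(c) -/
def qm (μ ν c : ℂ) (m : Fin N → ℤ) : T.VgC μ ν c :=
  c⁻¹ • (Submodule.Quotient.mk (T.uι (T.k (mIdx 0 m) 0) • T.vac μ ν))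

/-- The defining relations of the generalized Verma module M(T₀):
for each generator x of the subalgebra g₀ ⊕ g₊ and each basis vector q^m of
T₀ = ℂ[q₁^±,…,q_N^±], the relator (u·x) ⊗ q^m − u ⊗ (x·q^m), where the action
of g₀ on T₀ is (t^m k₀)q^r = c q^{r+m}, (t^m k_p)q^r = 0, (t^m ⊗ g)q^r = 0,
(t^m d₀)q^r = ½(μ+ν)c q^{r+m}, (t^m d_p)q^r = (r_p + νc m_p) q^{r+m}, and g₊
acts trivially. -/
def RelT0 (μ ν c : ℂ) : Set (T.U ⊗[ℂ] T0c N) :=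
  {z | (∃ (u : T.U) (r m' : Fin N → ℤ),
        z = (u * T.uι (T.k (mIdx 0 r) 0)) ⊗ₜ[ℂ] bq m'
          - u ⊗ₜ[ℂ] (c • bq (m' + r)))
    ∨ (∃ (u : T.U) (j : ℤ) (r m' : Fin N → ℤ) (p : Fin (N + 1)), 1 ≤ j ∧
        z = (u * T.uι (T.k (mIdx j r) p)) ⊗ₜ[ℂ] bq m')
    ∨ (∃ (u : T.U) (r m' : Fin N → ℤ) (p : Fin N),
        z = (u * T.uι (T.k (mIdx 0 r) p.succ)) ⊗ₜ[ℂ] bq m')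
    ∨ (∃ (u : T.U) (j : ℤ) (r m' : Fin N → ℤ) (x : g), 0 ≤ j ∧
        z = (u * T.uι (T.tg (mIdx j r) x)) ⊗ₜ[ℂ] bq m')
    ∨ (∃ (u : T.U) (j : ℤ) (r m' : Fin N → ℤ) (p : Fin (N + 1)), 1 ≤ j ∧
        z = (u * T.uι (T.d (mIdx j r) p)) ⊗ₜ[ℂ] bq m')
    ∨ (∃ (u : T.U) (r m' : Fin N → ℤ),
        z = (u * T.uι (T.d (mIdx 0 r) 0)) ⊗ₜ[ℂ] bq m'
          - u ⊗ₜ[ℂ] (((μ + ν) * c / 2) • bq (m' + r)))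
    ∨ (∃ (u : T.U) (r m' : Fin N → ℤ) (s : Fin N),
        z = (u * T.uι (T.d (mIdx 0 r) s.succ)) ⊗ₜ[ℂ] bq m'
          - u ⊗ₜ[ℂ] (((m' s : ℂ) + ν * c * (r s : ℂ)) • bq (m' + r)))}

/-- the generalized Verma module M(T₀) -/
def MT0 (μ ν c : ℂ) := (T.U ⊗[ℂ] T0c N) ⧸ Submodule.span T.U (T.RelT0 μ ν c)

instance (μ ν c : ℂ) : AddCommGroup (T.MT0 μ ν c) :=
  inferInstanceAs (AddCommGroup ((T.U ⊗[ℂ] T0c N) ⧸ _))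

instance (μ ν c : ℂ) : Module T.U (T.MT0 μ ν c) :=
  inferInstanceAs (Module T.U ((T.U ⊗[ℂ] T0c N) ⧸ _))

instance (μ ν c : ℂ) : Module ℂ (T.MT0 μ ν c) :=
  inferInstanceAs
    (Module ℂ ((T.U ⊗[ℂ] T0c N) ⧸ Submodule.span T.U (T.RelT0 μ ν c)))

instance (μ ν c : ℂ) : IsScalarTower ℂ T.U (T.MT0 μ ν c) :=
  inferInstanceAs
    (IsScalarTower ℂ T.U ((T.U ⊗[ℂ] T0c N) ⧸ Submodule.span T.U (T.RelT0 μ ν c)))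

/-- the (unique) maximal proper submodule M^rad of M(T₀), realized as the sum
of all proper submodules -/
def Mrad (μ ν c : ℂ) : Submodule T.U (T.MT0 μ ν c) :=
  sSup {P : Submodule T.U (T.MT0 μ ν c) | P ≠ ⊤}

/-- L(T₀) = M(T₀)/M^rad, the irreducible quotient of M(T₀) -/
def LT0 (μ ν c : ℂ) := T.MT0 μ ν c ⧸ T.Mrad μ ν c

instance (μ ν c : ℂ) : AddCommGroup (T.LT0 μ ν c) :=
  inferInstanceAs (AddCommGroup (T.MT0 μ ν c ⧸ _))

instance (μ ν c : ℂ) : Module T.U (T.LT0 μ ν c) :=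
  inferInstanceAs (Module T.U (T.MT0 μ ν c ⧸ _))

instance (μ ν c : ℂ) : Module ℂ (T.LT0 μ ν c) :=
  inferInstanceAs (Module ℂ (T.MT0 μ ν c ⧸ T.Mrad μ ν c))

instance (μ ν c : ℂ) : IsScalarTower ℂ T.U (T.LT0 μ ν c) :=
  inferInstanceAs (IsScalarTower ℂ T.U (T.MT0 μ ν c ⧸ T.Mrad μ ν c))

/-- the image of q^m ∈ T₀ in L(T₀) -/
def qL (μ ν c : ℂ) (m : Fin N → ℤ) : T.LT0 μ ν c :=
  Submodule.Quotient.mk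
    (Submodule.Quotient.mk ((1 : T.U) ⊗ₜ[ℂ] bq m))

/-- the element E^m_{pa} = (t₀^{-1}t^{ε_p} d̃_a)q^{m−ε_p} − (t₀^{-1}d̃_a)q^m
+ (1/c) δ_{ap} (t₀^{-1}k_p)q^m of L(T₀) -/
def Em (μ ν c : ℂ) (m : Fin N → ℤ) (p a : Fin N) : T.LT0 μ ν c :=
  T.uι (T.dT ν (-1) (eps p) a) • T.qL μ ν c (m - eps p)
    - T.uι (T.dT ν (-1) 0 a) • T.qL μ ν c m
    + (if a = p then c⁻¹ else 0) • (T.uι (T.k (mIdx (-1) 0) p.succ) • T.qL μ ν c m)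

end Tor

end

end ToroidalPaper

namespace ToroidalPaper

noncomputable section Aux12

variable {N : ℕ}

lemma mIdx_add (j j' : ℤ) (s s' : Fin N → ℤ) :
    mIdx j s + mIdx j' s' = mIdx (j + j') (s + s') := by
  funext i
  refine Fin.cases ?_ (fun q => ?_) i <;> simp [mIdx]

lemma mIdx_zero (j : ℤ) (s : Fin N → ℤ) : mIdx j s 0 = j := rfl

lemma mIdx_succ (j : ℤ) (s : Fin N → ℤ) (p : Fin N) : mIdx j s p.succ = s p := by
  simp [mIdx]

namespace Tor

variable {N : ℕ} {g : Type} [LieRing g] [LieAlgebra ℂ g] (T : Tor N g)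

lemma uι_zero : T.uι (0 : T.G) = 0 := (T.uι).map_zero

lemma uι_add (x y : T.G) : T.uι (x + y) = T.uι x + T.uι y := (T.uι).map_add x y

lemma uι_neg (x : T.G) : T.uι (-x) = - T.uι x := by
  simpa using (T.uι).map_smul (-1 : ℂ) x

lemma uι_smul (a : ℂ) (x : T.G) : T.uι (a • x) = a • T.uι x := (T.uι).map_smul a x

lemma uι_sum {ι : Type*} (t : Finset ι) (f : ι → T.G) :
    T.uι (∑ i ∈ t, f i) = ∑ i ∈ t, T.uι (f i) :=
  map_sum T.uι.toLinearMap f t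

variable (μ ν c : ℂ)

/-- image of the vacuum in V_g(c) -/
def vC : T.VgC μ ν c := Submodule.Quotient.mk (T.vac μ ν)

lemma qm_eq (m : Fin N → ℤ) :
    T.qm μ ν c m = c⁻¹ • (T.uι (T.k (mIdx 0 m) 0) • T.vC μ ν c) := by
  rfl

lemma kill {z : T.G} (hz : z ∈ T.gPlusGen μ ν) :
    T.uι z • T.vC μ ν c = 0 := by
  change Submodule.Quotient.mk (p := T.RS μ ν c) (T.uι z • T.vac μ ν) = 0
  have h1 : T.uι z • T.vac μ ν = 0 := by
    change Submodule.Quotient.mk (p := Submodule.span T.U ((⇑(T.uι)) '' T.gPlusGen μ ν))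
      (T.uι z • (1 : T.U)) = 0
    rw [Submodule.Quotient.mk_eq_zero]
    have : T.uι z • (1 : T.U) = T.uι z := by simp [smul_eq_mul]
    rw [this]
    exact Submodule.subset_span (Set.mem_image_of_mem _ hz)
  rw [h1, Submodule.Quotient.mk_zero]

lemma swapU (x y : T.G) (v : T.VgC μ ν c) :
    T.uι x • (T.uι y • v) = T.uι y • (T.uι x • v) + T.uι ⁅x, y⁆ • v := by
  rw [← mul_smul, ← mul_smul, ← add_smul]
  congr 1
  have h : T.uι ⁅x, y⁆ = ⁅T.uι x, T.uι y⁆ := (T.uι).map_lie x y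
  rw [h, Ring.lie_def]
  abel

lemma kk_rel (a b : Fin N → ℤ) :
    T.uι (T.k (mIdx 0 a) 0) • (T.uι (T.k (mIdx 0 b) 0) • T.vC μ ν c)
      = c • (T.uι (T.k (mIdx 0 (a + b)) 0) • T.vC μ ν c) := by
  have hmem : (T.uι (T.k (mIdx 0 a) 0) • (T.uι (T.k (mIdx 0 b) 0) • T.vac μ ν)
      - c • (T.uι (T.k (mIdx 0 (a + b)) 0) • T.vac μ ν)) ∈ T.RS μ ν c :=
    Submodule.subset_span (Or.inr ⟨a, b, rfl⟩)
  have h0 : (Submodule.Quotient.mk (T.uι (T.k (mIdx 0 a) 0) •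
        (T.uι (T.k (mIdx 0 b) 0) • T.vac μ ν)
      - c • (T.uι (T.k (mIdx 0 (a + b)) 0) • T.vac μ ν)) : T.VgC μ ν c) = 0 :=
    (Submodule.Quotient.mk_eq_zero _).mpr hmem
  rw [Submodule.Quotient.mk_sub, sub_eq_zero] at h0
  exact h0

/-- membership lemmas in gPlusGen -/
lemma mem_k0 {j : ℤ} (hj : 1 ≤ j) (r : Fin N → ℤ) :
    T.k (mIdx j r) 0 ∈ T.gPlusGen μ ν :=
  ⟨j, r, Or.inl ⟨hj, rfl⟩⟩

lemma mem_ks {j : ℤ} (hj : 0 ≤ j) (r : Fin N → ℤ) (p : Fin N) :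
    T.k (mIdx j r) p.succ ∈ T.gPlusGen μ ν :=
  ⟨j, r, Or.inr (Or.inl ⟨p, hj, rfl⟩)⟩

lemma mem_kAny {j : ℤ} (hj : 1 ≤ j) (r : Fin N → ℤ) (p : Fin (N + 1)) :
    T.k (mIdx j r) p ∈ T.gPlusGen μ ν := by
  refine Fin.cases ?_ (fun q => ?_) p
  · exact T.mem_k0 μ ν hj r
  · exact T.mem_ks μ ν (le_trans zero_le_one hj) r q

lemma mem_tg {j : ℤ} (hj : 0 ≤ j) (r : Fin N → ℤ) (x : g) :
    T.tg (mIdx j r) x ∈ T.gPlusGen μ ν :=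
  ⟨j, r, Or.inr (Or.inr (Or.inl ⟨x, hj, rfl⟩))⟩

lemma mem_dT {j : ℤ} (hj : 0 ≤ j) (r : Fin N → ℤ) (p : Fin N) :
    T.dT ν j r p ∈ T.gPlusGen μ ν :=
  ⟨j, r, Or.inr (Or.inr (Or.inr (Or.inl ⟨p, hj, rfl⟩)))⟩

lemma mem_dT0 {j : ℤ} (hj : -1 ≤ j) (r : Fin N → ℤ) :
    T.dT0 μ ν j r ∈ T.gPlusGen μ ν :=
  ⟨j, r, Or.inr (Or.inr (Or.inr (Or.inr ⟨hj, rfl⟩)))⟩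

variable {B : g →ₗ[ℂ] g →ₗ[ℂ] ℂ}

/-- a k-element of g^(+) kills (t^w k₀)·vac -/
lemma killK_k (hT : T.IsToroidal B μ ν) {j : ℤ} (s' : Fin N → ℤ) (p : Fin (N + 1))
    (hmem : T.k (mIdx j s') p ∈ T.gPlusGen μ ν) (w : Fin N → ℤ) :
    T.uι (T.k (mIdx j s') p) • (T.uι (T.k (mIdx 0 w) 0) • T.vC μ ν c) = 0 := by
  rw [T.swapU, hT.br_kk, T.kill μ ν c hmem]
  simp

/-- a tg-element with j ≥ 0 kills (t^w k₀)·vac -/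
lemma killK_tg (hT : T.IsToroidal B μ ν) {j : ℤ} (hj : 0 ≤ j) (s' : Fin N → ℤ) (x : g) (w : Fin N → ℤ) :
    T.uι (T.tg (mIdx j s') x) • (T.uι (T.k (mIdx 0 w) 0) • T.vC μ ν c) = 0 := by
  rw [T.swapU]
  have hbr : ⁅T.tg (mIdx j s') x, T.k (mIdx 0 w) 0⁆ = 0 := by
    rw [← lie_skew, hT.br_kg, neg_zero]
  rw [hbr, T.kill μ ν c (T.mem_tg μ ν hj s' x)]
  simp

end Tor

end Aux12

/-- Lemma 4.4: identities in V_g(c). -/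
theorem statement12 (N : ℕ) (hN : 1 ≤ N) (g : Type) [LieRing g] [LieAlgebra ℂ g]
    [FiniteDimensional ℂ g] [LieAlgebra.IsSimple ℂ g]
    (B : g →ₗ[ℂ] g →ₗ[ℂ] ℂ)
    (hBsymm : ∀ x y : g, B x y = B y x)
    (hBnondeg : ∀ x : g, (∀ y : g, B x y = 0) → x = 0)
    (hBinv : ∀ x y z : g, B ⁅x, y⁆ z = B x ⁅y, z⁆)
    (μ ν : ℂ) (T : Tor N g) (hT : T.IsToroidal B μ ν)
    (c : ℂ) (hc : c ≠ 0) (m r s : Fin N → ℤ) (gx gx' : g) (b : Fin N) :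
    -- (t₀t^s k₀)·(t₀^{-1}t^r⊗g)·q^{m−r} = 0
    T.uι (T.k (mIdx 1 s) 0) • (T.uι (T.tg (mIdx (-1) r) gx) • T.qm μ ν c (m - r)) = 0 ∧
    -- (t₀t^s k_b)·(t₀^{-1}t^r⊗g)·q^{m−r} = 0
    T.uι (T.k (mIdx 1 s) b.succ) • (T.uι (T.tg (mIdx (-1) r) gx) • T.qm μ ν c (m - r)) = 0 ∧
    -- (t₀t^s⊗g′)·(t₀^{-1}t^r⊗g)·q^{m−r} = (g′|g)·c·q^{m+s}
    T.uι (T.tg (mIdx 1 s) gx') • (T.uι (T.tg (mIdx (-1) r) gx) • T.qm μ ν c (m - r)) =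
      (B gx' gx * c) • T.qm μ ν c (m + s) ∧
    -- (t₀t^s d̃₀)·(t₀^{-1}t^r⊗g)·q^{m−r} = 0
    T.uι (T.dT0 μ ν 1 s) • (T.uι (T.tg (mIdx (-1) r) gx) • T.qm μ ν c (m - r)) = 0 ∧
    -- (t₀t^s d̃_b)·(t₀^{-1}t^r⊗g)·q^{m−r} = 0
    T.uι (T.dT ν 1 s b) • (T.uι (T.tg (mIdx (-1) r) gx) • T.qm μ ν c (m - r)) = 0 := by
  classical
  have hsc : ∀ (u : T.U) (e : ℂ) (x : T.VgC μ ν c), u • e • x = e • u • x :=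
    fun u e x => (smul_comm e u x).symm
  have hq : T.qm μ ν c (m - r)
      = c⁻¹ • (T.uι (T.k (mIdx 0 (m - r)) 0) • T.vC μ ν c) := T.qm_eq μ ν c (m - r)
  -- abbreviations
  have hA0 : ∀ (s' : Fin N → ℤ) (x : g),
      T.uι (T.tg (mIdx 0 s') x) • (T.uι (T.k (mIdx 0 (m - r)) 0) • T.vC μ ν c) = 0 :=
    fun s' x => T.killK_tg μ ν c hT le_rfl s' x (m - r)
  -- Part 1 & 2: k-elements with j = 1
  have hkpart : ∀ p : Fin (N + 1),
      T.uι (T.k (mIdx 1 s) p) •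
        (T.uι (T.tg (mIdx (-1) r) gx) • T.qm μ ν c (m - r)) = 0 := by
    intro p
    rw [hq, hsc, hsc, T.swapU]
    have h1 : T.uι (T.k (mIdx 1 s) p) •
        (T.uι (T.k (mIdx 0 (m - r)) 0) • T.vC μ ν c) = 0 :=
      T.killK_k μ ν c hT s p (T.mem_kAny μ ν le_rfl s p) (m - r)
    have h2 : ⁅T.k (mIdx 1 s) p, T.tg (mIdx (-1) r) gx⁆ = 0 := hT.br_kg _ _ _ _
    rw [h1, h2, smul_zero, T.uι_zero, zero_smul, add_zero, smul_zero]
  refine ⟨hkpart 0, hkpart b.succ, ?_, ?_, ?_⟩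
  -- Part 3
  · have harith : s + r + (m - r) = m + s := by abel
    have hkSum : T.uι (T.kSum (mIdx 1 s) (mIdx (-1) r)) •
        (T.uι (T.k (mIdx 0 (m - r)) 0) • T.vC μ ν c)
        = c • (T.uι (T.k (mIdx 0 (m + s)) 0) • T.vC μ ν c) := by
      rw [Tor.kSum, mIdx_add]
      norm_num
      rw [Finset.sum_smul, Fin.sum_univ_succ]
      simp only [← T.uι_smul]
      have hz : ∀ q : Fin N,
          (T.uι (((mIdx 1 s) q.succ : ℂ) • T.k (mIdx 0 (s + r)) q.succ)) •
            (T.uι (T.k (mIdx 0 (m - r)) 0) • T.vC μ ν c) = 0 := by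
        intro q
        rw [T.uι_smul, smul_assoc,
          T.killK_k μ ν c hT (s + r) q.succ (T.mem_ks μ ν le_rfl (s + r) q) (m - r),
          smul_zero]
      rw [Finset.sum_eq_zero fun q _ => hz q, add_zero]
      have h0 : ((mIdx 1 s) 0 : ℂ) = 1 := by simp [mIdx]
      rw [T.uι_smul, smul_assoc, h0, one_smul, T.kk_rel μ ν c (s + r) (m - r), harith]
    rw [hq, hsc, hsc, T.swapU, hT.br_gg, T.uι_add, T.uι_smul, add_smul, smul_assoc]
    have hx : T.uι (T.tg (mIdx 1 s) gx') •
        (T.uι (T.k (mIdx 0 (m - r)) 0) • T.vC μ ν c) = 0 :=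
      T.killK_tg μ ν c hT (by norm_num) s gx' (m - r)
    have hsum : mIdx 1 s + mIdx (-1) r = mIdx 0 (s + r) := by
      rw [mIdx_add]; norm_num
    rw [hx, smul_zero, zero_add, hsum, hA0, zero_add, hkSum,
      T.qm_eq μ ν c (m + s)]
    rw [smul_smul, smul_smul, smul_smul]
    ring_nf
  -- Part 4
  · rw [hq, hsc, hsc, T.swapU]
    have hbrA : ⁅T.dT0 μ ν 1 s, T.tg (mIdx (-1) r) gx⁆ = T.tg (mIdx 0 (s + r)) gx := by
      rw [Tor.dT0, add_lie, neg_lie, smul_lie, hT.br_kg, smul_zero, add_zero,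
        hT.br_dg, mIdx_add]
      norm_num [mIdx]
    have hDKv : T.uι (T.dT0 μ ν 1 s) •
        (T.uι (T.k (mIdx 0 (m - r)) 0) • T.vC μ ν c) = 0 := by
      rw [T.swapU, T.kill μ ν c (T.mem_dT0 μ ν (by norm_num) s), smul_zero, zero_add]
      have hbrK : ⁅T.dT0 μ ν 1 s, T.k (mIdx 0 (m - r)) 0⁆
          = - T.kSum (mIdx 1 s) (mIdx 0 (m - r)) := by
        rw [Tor.dT0, add_lie, neg_lie, smul_lie, hT.br_kk, smul_zero, add_zero,
          hT.br_dk]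
        simp [mIdx]
      rw [hbrK, T.uι_neg, neg_smul, neg_eq_zero, Tor.kSum, mIdx_add, T.uι_sum,
        Finset.sum_smul]
      refine Finset.sum_eq_zero fun p _ => ?_
      rw [T.uι_smul, smul_assoc,
        T.kill μ ν c (T.mem_kAny μ ν (by norm_num) (s + (m - r)) p), smul_zero]
    rw [hDKv, smul_zero, zero_add, hbrA, hA0, smul_zero]
  -- Part 5
  · rw [hq, hsc, hsc, T.swapU]
    have hbrA : ⁅T.dT ν 1 s b, T.tg (mIdx (-1) r) gx⁆
        = (r b : ℂ) • T.tg (mIdx 0 (s + r)) gx := by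
      rw [Tor.dT, sub_lie, smul_lie, hT.br_kg, smul_zero, sub_zero, hT.br_dg,
        mIdx_add]
      norm_num [mIdx]
    have hDKv : T.uι (T.dT ν 1 s b) •
        (T.uι (T.k (mIdx 0 (m - r)) 0) • T.vC μ ν c) = 0 := by
      rw [T.swapU, T.kill μ ν c (T.mem_dT μ ν (by norm_num) s b), smul_zero, zero_add]
      have hbrK : ⁅T.dT ν 1 s b, T.k (mIdx 0 (m - r)) 0⁆
          = ((m - r) b : ℂ) • T.k (mIdx 1 s + mIdx 0 (m - r)) 0 := by
        rw [Tor.dT, sub_lie, smul_lie, hT.br_kk, smul_zero, sub_zero, hT.br_dk]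
        simp [mIdx, Fin.succ_ne_zero]
      rw [hbrK, mIdx_add, T.uι_smul, smul_assoc,
        T.kill μ ν c (T.mem_k0 μ ν (by norm_num) (s + (m - r))), smul_zero]
    rw [hDKv, smul_zero, zero_add, hbrA, T.uι_smul, smul_assoc, hA0, smul_zero,
      smul_zero]

end ToroidalPaper
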